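/- arXiv:2211.09009 — 7 statements merged into one kernel-verified Lean document; each statement's English description precedes it below -/
import Mathlib

section
/- For every positive integer x, there exists a pair of SP numbers (a, b) with a > b and a - b = x. -/
/-- An SP number is a natural number of the form `p * a ^ 2` where `p` is prime and `a ≥ 2`. -/
def IsSP (n : ℕ) : Prop := ∃ p a : ℕ, p.Prime ∧ 2 ≤ a ∧ n = p * a ^ 2

lemma sp_gap_prime (p : ℕ) (hp : p.Prime) (hp2 : p ≠ 2) :
    ∃ a b : ℕ, IsSP a ∧ IsSP b ∧ b < a ∧ a - b = p := by
  have hp3 : 3 ≤ p := by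
    have := hp.two_le
    omega
  have hd : (0:ℤ) < 2 * (p:ℤ) := by positivity
  have hns : ¬ IsSquare (2 * (p:ℤ)) := by
    rintro ⟨r, hr⟩
    have hr' : (2 * p : ℤ) = (r.natAbs : ℤ) * r.natAbs := by
      rw [hr, ← Int.natAbs_mul_self]
      push_cast
      ring
    have hnn : 2 * p = r.natAbs * r.natAbs := by exact_mod_cast hr'
    obtain ⟨t, ht'⟩ : 2 ∣ r.natAbs := by
      have : 2 ∣ r.natAbs * r.natAbs := ⟨p, by omega⟩
      exact (Nat.prime_two.dvd_mul.mp this).elim id id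
    have h' : 2 * p = 2 * t * (2 * t) := by rw [← ht']; exact hnn
    have hpt : 2 ∣ p := ⟨t * t, by nlinarith⟩
    have := Nat.Prime.eq_one_or_self_of_dvd hp 2 hpt
    omega
  obtain ⟨k, m, hkm, hm⟩ := Pell.exists_of_not_isSquare hd hns
  set K := k.natAbs with hK
  set M := m.natAbs with hM
  have hZ : ((K:ℤ))^2 = 1 + 2 * p * ((M:ℤ))^2 := by
    rw [hK, hM, Int.natAbs_sq, Int.natAbs_sq]
    linarith [hkm]
  have hnat : K ^ 2 = 1 + 2 * p * M ^ 2 := by exact_mod_cast hZ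
  have hM1 : 1 ≤ M := by
    rcases Nat.eq_zero_or_pos M with h0 | h
    · exfalso; exact hm (Int.natAbs_eq_zero.mp h0)
    · exact h
  have hK2 : 2 ≤ K := by nlinarith
  refine ⟨p * K ^ 2, 2 * (p * M) ^ 2, ⟨p, K, hp, hK2, rfl⟩,
    ⟨2, p * M, Nat.prime_two, ?_, rfl⟩, ?_, ?_⟩
  · calc 2 ≤ 3 * 1 := by norm_num
    _ ≤ p * M := Nat.mul_le_mul hp3 hM1
  · have : p * K ^ 2 = 2 * (p * M) ^ 2 + p := by rw [hnat]; ring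
    omega
  · have : p * K ^ 2 = 2 * (p * M) ^ 2 + p := by rw [hnat]; ring
    omega

/-- For every positive integer `x`, there exists a pair of SP numbers `(a, b)` with `a > b`
and `a - b = x`. -/
theorem sp_pair_with_any_gap (x : ℕ) (hx : 0 < x) :
    ∃ a b : ℕ, IsSP a ∧ IsSP b ∧ b < a ∧ a - b = x := by
  induction x using Nat.strong_induction_on with
  | _ x ih =>
  by_cases h4 : 4 ∣ x
  · -- scale the pair for x/4 by 4
    obtain ⟨y, rfl⟩ := h4
    have hy : 0 < y := by omega
    obtain ⟨a, b, ⟨p, c, hp, hc, rfl⟩, ⟨q, d, hq, hd, rfl⟩, hlt, hsub⟩ :=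
      ih y (by omega) hy
    refine ⟨p * (2 * c) ^ 2, q * (2 * d) ^ 2, ⟨p, 2 * c, hp, by omega, rfl⟩,
      ⟨q, 2 * d, hq, by omega, rfl⟩, ?_, ?_⟩
    · have h1 : p * (2 * c) ^ 2 = 4 * (p * c ^ 2) := by ring
      have h2 : q * (2 * d) ^ 2 = 4 * (q * d ^ 2) := by ring
      omega
    · have h1 : p * (2 * c) ^ 2 = 4 * (p * c ^ 2) := by ring
      have h2 : q * (2 * d) ^ 2 = 4 * (q * d ^ 2) := by ring
      omega
  · rcases Nat.even_or_odd x with he | ho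
    · -- x ≡ 2 mod 4 : x = 4n+2
      obtain ⟨n, rfl⟩ : ∃ n, x = 4 * n + 2 := by
        obtain ⟨w, hw⟩ := he
        refine ⟨(x - 2) / 4, ?_⟩
        omega
      match n with
      | 0 => exact ⟨20, 18, ⟨5, 2, by norm_num, le_refl 2, by norm_num⟩,
          ⟨2, 3, Nat.prime_two, by norm_num, by norm_num⟩, by norm_num, by norm_num⟩
      | 1 => exact ⟨18, 12, ⟨2, 3, Nat.prime_two, by norm_num, by norm_num⟩,
          ⟨3, 2, Nat.prime_three, le_refl 2, by norm_num⟩, by norm_num, by norm_num⟩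
      | (n+2) =>
        refine ⟨2 * (n + 3) ^ 2, 2 * (n + 2) ^ 2,
          ⟨2, n + 3, Nat.prime_two, by omega, rfl⟩,
          ⟨2, n + 2, Nat.prime_two, by omega, rfl⟩, ?_, ?_⟩
        · have : 2 * (n + 3) ^ 2 = 2 * (n + 2) ^ 2 + (4 * (n + 2) + 2) := by ring
          omega
        · have : 2 * (n + 3) ^ 2 = 2 * (n + 2) ^ 2 + (4 * (n + 2) + 2) := by ring
          omega
    · -- x odd
      by_cases h1 : x = 1
      · subst h1
        exact ⟨28, 27, ⟨7, 2, by norm_num, le_refl 2, by norm_num⟩,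
          ⟨3, 3, Nat.prime_three, by norm_num, by norm_num⟩, by norm_num, by norm_num⟩
      · set p := x.minFac with hpdef
        have hp : p.Prime := Nat.minFac_prime h1
        have hpd : p ∣ x := Nat.minFac_dvd x
        obtain ⟨c, hc⟩ := hpd
        have hp2 : p ≠ 2 := by
          intro h
          have : 2 ∣ x := h ▸ Nat.minFac_dvd x
          rcases ho with ⟨w, hw⟩
          omega
        have hcodd : Odd c := by
          rcases Nat.even_or_odd c with hce | hco
          · exfalso
            obtain ⟨w, hw⟩ := hce
            have hev : Even x := ⟨p * w, by rw [hc, hw]; ring⟩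
            exact (Nat.not_odd_iff_even.mpr hev) ho
          · exact hco
        obtain ⟨t, ht⟩ := hcodd
        -- c = 2t+1
        match t, ht with
        | 0, ht =>
          -- c = 1, x = p prime
          have hxp : x = p := by rw [hc, ht]; ring
          rw [hxp]
          exact sp_gap_prime p hp hp2
        | 1, ht =>
          -- c = 3, so p = 3 and x = 9
          have h3d : 3 ∣ x := ⟨p, by rw [hc, ht]; ring⟩
          have hle : p ≤ 3 := Nat.minFac_le_of_dvd (by norm_num) h3d
          have hp3 : p = 3 := by
            have := hp.two_le
            omega
          have hx9 : x = 9 := by rw [hc, ht, hp3]; norm_num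
          rw [hx9]
          exact ⟨27, 18, ⟨3, 3, Nat.prime_three, by norm_num, by norm_num⟩,
            ⟨2, 3, Nat.prime_two, by norm_num, by norm_num⟩, by norm_num, by norm_num⟩
        | (t+2), ht =>
          -- c = 2t+5 ≥ 5
          refine ⟨p * (t + 3) ^ 2, p * (t + 2) ^ 2,
            ⟨p, t + 3, hp, by omega, rfl⟩, ⟨p, t + 2, hp, by omega, rfl⟩, ?_, ?_⟩
          · have h1' : p * (t + 3) ^ 2 = p * (t + 2) ^ 2 + p * (2 * (t + 2) + 1) := by ring
            have := hp.two_le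
            nlinarith
          · have h1' : p * (t + 3) ^ 2 = p * (t + 2) ^ 2 + p * (2 * (t + 2) + 1) := by ring
            have hx : x = p * (2 * (t + 2) + 1) := by rw [hc, ht]
            omega
end

section
/- For every prime number x, there exist SP numbers a and b with a - b = x. (In the paper's proof these are produced as a = x·M² and b = p·(x·N)² from a positive solution (M, N) of the Pell equation m² - p·x·n² = 1 for a prime p ≠ x.) -/
/-- For every prime `x`, there exist SP numbers `a` and `b` with `a - b = x`. -/
theorem sp_pair_with_prime_gap (x : ℕ) (hx : x.Prime) :
    ∃ a b : ℕ, IsSP a ∧ IsSP b ∧ b < a ∧ a - b = x := by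
  -- choose a prime p > x
  obtain ⟨p, hpx, hp⟩ := Nat.exists_infinite_primes (x + 1)
  have hne : p ≠ x := by omega
  have hp2 := hp.two_le
  have hx2 := hx.two_le
  -- p * x is squarefree, hence not a square
  have hsqf : Squarefree (p * x) :=
    (Nat.squarefree_mul ((Nat.coprime_primes hp hx).mpr hne)).mpr
      ⟨hp.squarefree, hx.squarefree⟩
  have hns : ¬ IsSquare (p * x) := by
    intro hs
    obtain ⟨r, hr⟩ := hs
    have hr1 : r * r ∣ p * x := by rw [hr]
    have := hsqf r hr1
    have : r = 1 := Nat.isUnit_iff.mp this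
    subst this
    simp at hr
    nlinarith
  have hd0 : (0 : ℤ) < ((p * x : ℕ) : ℤ) := by positivity
  obtain ⟨m, n, hmn, hn0⟩ :=
    Pell.exists_of_not_isSquare hd0 (by rwa [Int.isSquare_natCast_iff])
  set M := m.natAbs with hMdef
  set N := n.natAbs with hNdef
  have hMc : ((M : ℤ)) ^ 2 = m ^ 2 := by
    rw [hMdef]; rw [Int.natAbs_sq]
  have hNc : ((N : ℤ)) ^ 2 = n ^ 2 := by
    rw [hNdef]; rw [Int.natAbs_sq]
  have key : M ^ 2 = p * x * N ^ 2 + 1 := by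
    have : ((M : ℤ)) ^ 2 = ((p * x : ℕ) : ℤ) * ((N : ℤ)) ^ 2 + 1 := by
      rw [hMc, hNc]; linarith
    exact_mod_cast this
  have hN1 : 1 ≤ N := by
    rcases Nat.eq_zero_or_pos N with h | h
    · exact absurd (Int.natAbs_eq_zero.mp h) hn0
    · exact h
  have hM3 : 2 ≤ M := by nlinarith
  refine ⟨x * M ^ 2, p * (x * N) ^ 2, ⟨x, M, hx, hM3, rfl⟩,
    ⟨p, x * N, hp, by nlinarith, rfl⟩, ?_, ?_⟩
  · nlinarith
  · have : p * (x * N) ^ 2 = x * (M ^ 2 - 1) := by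
      rw [key, Nat.add_sub_cancel]; ring
    rw [this, Nat.mul_sub, mul_one]
    have hle : x ≤ x * M ^ 2 := Nat.le_mul_of_pos_right x (by positivity)
    omega
end

section
/- For every odd composite squarefree positive integer x, there exist SP numbers a and b with a - b = x. Specifically, writing x = p₁·(2k+1) where p₁ is the smallest prime factor of x and 2k+1 = x/p₁ > 3, the numbers a = p₁·(k+1)² and b = p₁·k² are SP numbers with a - b = x. -/
/-- For every odd composite squarefree positive integer `x`, there exist SP numbers with
difference `x`; moreover, writing `x = p₁ * (2 * k + 1)` with `p₁ = x.minFac` the smallest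
prime factor of `x` (so that `2 * k + 1 = x / p₁ > 3`), the numbers `p₁ * (k + 1) ^ 2` and
`p₁ * k ^ 2` are SP numbers with difference `x`. -/
theorem sp_pair_odd_composite_squarefree (x : ℕ) (hpos : 0 < x) (hodd : Odd x)
    (hcomp : 1 < x ∧ ¬ x.Prime) (hsf : Squarefree x) :
    (∃ a b : ℕ, IsSP a ∧ IsSP b ∧ b < a ∧ a - b = x) ∧
    (3 < x / x.minFac) ∧
    ∀ k : ℕ, x / x.minFac = 2 * k + 1 →
      IsSP (x.minFac * (k + 1) ^ 2) ∧ IsSP (x.minFac * k ^ 2) ∧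
        x.minFac * (k + 1) ^ 2 - x.minFac * k ^ 2 = x := by
  obtain ⟨hx1, hnp⟩ := hcomp
  have hp : x.minFac.Prime := Nat.minFac_prime (by omega)
  have hpd : x.minFac ∣ x := Nat.minFac_dvd x
  set p := x.minFac with hpdef
  set m := x / p with hmdef
  have hxm : p * m = x := Nat.mul_div_cancel' hpd
  have hm1 : 1 < m := by
    rcases Nat.lt_or_ge m 2 with h | h
    · interval_cases m
      · omega
      · exfalso; apply hnp; rw [← hxm, Nat.mul_one]; exact hp
    · omega
  have hmodd : Odd m := by
    rcases Nat.even_or_odd m with he | ho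
    · exfalso
      have : Even x := by rw [← hxm]; exact he.mul_left p
      exact (Nat.not_odd_iff_even.mpr this) hodd
    · exact ho
  have hm3 : m ≠ 3 := by
    intro h3
    have h3d : (3 : ℕ) ∣ x := ⟨p, by rw [← hxm, h3]; ring⟩
    have hp3 : p ≤ 3 := Nat.minFac_le_of_dvd (by norm_num) h3d
    have hp2 : p ≠ 2 := by
      intro h2
      have : (2 : ℕ) ∣ x := h2 ▸ hpd
      exact (Nat.not_odd_iff_even.mpr (even_iff_two_dvd.mpr this)) hodd
    have : p = 3 := by
      have := hp.two_le; omega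
    have h9 : (3 * 3 : ℕ) ∣ x := by rw [← hxm, this, h3]
    exact (Nat.Prime.prime (by norm_num)).not_unit (hsf 3 h9)
  have hm5 : 3 < m := by
    obtain ⟨j, hj⟩ := hmodd; omega
  refine ⟨?_, hm5, ?_⟩
  · obtain ⟨j, hj⟩ := hmodd
    refine ⟨p * (j + 1) ^ 2, p * j ^ 2, ⟨p, j + 1, hp, by omega, rfl⟩,
      ⟨p, j, hp, by omega, rfl⟩, ?_, ?_⟩
    · have hj2 : j ^ 2 < (j + 1) ^ 2 := by nlinarith
      exact Nat.mul_lt_mul_of_pos_left hj2 hp.pos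
    · have : p * (j + 1) ^ 2 = p * j ^ 2 + p * (2 * j + 1) := by ring
      rw [this, Nat.add_sub_cancel_left, ← hj, hxm]
  · intro k hk
    have hk2 : 2 ≤ k := by omega
    refine ⟨⟨p, k + 1, hp, by omega, rfl⟩, ⟨p, k, hp, by omega, rfl⟩, ?_⟩
    have : p * (k + 1) ^ 2 = p * k ^ 2 + p * (2 * k + 1) := by ring
    rw [this, Nat.add_sub_cancel_left, ← hk, hxm]
end

section
/- For every even composite squarefree positive integer x, there exist SP numbers a and b with a - b = x. -/
/-- For every even composite squarefree positive integer `x`, there exist SP numbers `a` and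
`b` with `a - b = x`. -/
theorem sp_pair_even_composite_squarefree (x : ℕ) (hpos : 0 < x) (heven : Even x)
    (hcomp : 1 < x ∧ ¬ x.Prime) (hsf : Squarefree x) :
    ∃ a b : ℕ, IsSP a ∧ IsSP b ∧ b < a ∧ a - b = x := by
  obtain ⟨k, hk⟩ := heven
  have hx2 : x = 2 * k := by omega
  have hkodd : Odd k := by
    rcases Nat.even_or_odd k with he | ho
    · exfalso
      obtain ⟨m, hm⟩ := he
      have : (2 : ℕ) * 2 ∣ x := ⟨m, by omega⟩
      have := hsf 2 (by simpa using this)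
      norm_num at this
    · exact ho
  obtain ⟨t, ht⟩ := hkodd
  rcases Nat.lt_or_ge t 2 with hlt | hge
  · interval_cases t
    · exfalso; exact hcomp.2 (by rw [show x = 2 by omega]; exact Nat.prime_two)
    · -- x = 6 : use 18 = 2*3^2 and 12 = 3*2^2
      refine ⟨18, 12, ⟨2, 3, Nat.prime_two, by norm_num, by norm_num⟩,
        ⟨3, 2, Nat.prime_three, by norm_num, by norm_num⟩, by norm_num, by omega⟩
  · refine ⟨2 * (t + 1) ^ 2, 2 * t ^ 2,
      ⟨2, t + 1, Nat.prime_two, by omega, rfl⟩,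
      ⟨2, t, Nat.prime_two, hge, rfl⟩, by nlinarith, by ring_nf; omega⟩
end

section
/- There are infinitely many SP numbers of the form x² + 1 with x a natural number; that is, the set of natural numbers x such that x² + 1 is an SP number is infinite. -/
/-- Pell-like sequence of solutions to `x ^ 2 + 1 = 2 * a ^ 2`. -/
def pellSeq : ℕ → ℕ × ℕ
  | 0 => (7, 5)
  | n + 1 => (3 * (pellSeq n).1 + 4 * (pellSeq n).2, 2 * (pellSeq n).1 + 3 * (pellSeq n).2)

lemma pellSeq_spec (n : ℕ) :
    (pellSeq n).1 ^ 2 + 1 = 2 * (pellSeq n).2 ^ 2 ∧ 2 ≤ (pellSeq n).2 := by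
  induction n with
  | zero => simp [pellSeq]
  | succ n ih =>
    obtain ⟨h1, h2⟩ := ih
    constructor
    · show (3 * (pellSeq n).1 + 4 * (pellSeq n).2) ^ 2 + 1 =
        2 * (2 * (pellSeq n).1 + 3 * (pellSeq n).2) ^ 2
      ring_nf
      ring_nf at h1
      nlinarith [h1]
    · show 2 ≤ 2 * (pellSeq n).1 + 3 * (pellSeq n).2
      omega

lemma pellSeq_mono : StrictMono (fun n => (pellSeq n).1) := by
  apply strictMono_nat_of_lt_succ
  intro n
  have h := (pellSeq_spec n).2
  show (pellSeq n).1 < 3 * (pellSeq n).1 + 4 * (pellSeq n).2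
  omega

/-- There are infinitely many SP numbers of the form `x ^ 2 + 1`. -/
theorem infinitely_many_sp_sq_add_one : {x : ℕ | IsSP (x ^ 2 + 1)}.Infinite := by
  apply Set.infinite_of_injective_forall_mem (f := fun n => (pellSeq n).1)
  case hi => exact pellSeq_mono.injective
  case hf =>
    intro n
    obtain ⟨h1, h2⟩ := pellSeq_spec n
    exact ⟨2, (pellSeq n).2, Nat.prime_two, h2, by omega⟩
end

section
/- Let p be a prime and let a ≥ 2 be a natural number having at least one prime factor congruent to 1 modulo 4. Then the SP number p·a² can be written as a sum of two SP numbers; that is, there exist SP numbers s and t with p·a² = s + t. -/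
/-- If `p` is prime and `a ≥ 2` has a prime factor congruent to `1` modulo `4`, then the SP
number `p * a ^ 2` is a sum of two SP numbers. -/
theorem sp_eq_add_of_prime_factor_one_mod_four (p a : ℕ) (hp : p.Prime) (ha : 2 ≤ a)
    (hfac : ∃ q : ℕ, q.Prime ∧ q % 4 = 1 ∧ q ∣ a) :
    ∃ s t : ℕ, IsSP s ∧ IsSP t ∧ p * a ^ 2 = s + t := by
  obtain ⟨q, hq, hq4, hqa⟩ := hfac
  haveI : Fact q.Prime := ⟨hq⟩
  obtain ⟨u, v, huv⟩ := Nat.Prime.sq_add_sq (p := q) (by omega)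
  obtain ⟨b, hb⟩ := hqa
  have hb1 : 1 ≤ b := by
    rcases Nat.eq_zero_or_pos b with h | h
    · subst h; simp at hb; omega
    · exact h
  -- u, v ≥ 1
  have hq2 := hq.two_le
  have hu1 : 1 ≤ u := by
    rcases Nat.eq_zero_or_pos u with h | h
    · subst h
      have hvq : v ∣ q := ⟨v, by nlinarith⟩
      rcases hq.eq_one_or_self_of_dvd v hvq with h1 | h1 <;> nlinarith
    · exact h
  have hv1 : 1 ≤ v := by
    rcases Nat.eq_zero_or_pos v with h | h
    · subst h
      have hvq : u ∣ q := ⟨u, by nlinarith⟩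
      rcases hq.eq_one_or_self_of_dvd u hvq with h1 | h1 <;> nlinarith
    · exact h
  -- u ≠ v
  have hne : u ≠ v := by
    rintro rfl
    omega
  -- WLOG handled by symmetry: take c := max - min
  wlog hlt : v < u generalizing u v
  · exact this v u (by omega) hv1 hu1 (Ne.symm hne) (by omega)
  set w := u ^ 2 - v ^ 2 with hw
  have hwv : w + v ^ 2 = u ^ 2 := Nat.sub_add_cancel (by nlinarith)
  have hw3 : 3 ≤ w := by nlinarith
  have hbuv : 2 ≤ 2 * b * u * v := by
    nlinarith [Nat.mul_le_mul (Nat.mul_le_mul hb1 hu1) hv1]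
  refine ⟨p * (b * w) ^ 2, p * (2 * b * u * v) ^ 2, ⟨p, b * w, hp, by nlinarith, rfl⟩,
    ⟨p, 2 * b * u * v, hp, hbuv, rfl⟩, ?_⟩
  have h2 : u ^ 2 = w + v ^ 2 := hwv.symm
  have key : w ^ 2 + (2 * u * v) ^ 2 = q ^ 2 := by
    calc w ^ 2 + (2 * u * v) ^ 2 = w ^ 2 + 4 * u ^ 2 * v ^ 2 := by ring
      _ = w ^ 2 + 4 * (w + v ^ 2) * v ^ 2 := by rw [h2]
      _ = ((w + v ^ 2) + v ^ 2) ^ 2 := by ring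
      _ = (u ^ 2 + v ^ 2) ^ 2 := by rw [h2]
      _ = q ^ 2 := by rw [huv]
  calc p * a ^ 2 = p * ((w ^ 2 + (2 * u * v) ^ 2) * b ^ 2) := by rw [key, hb]; ring
    _ = p * (b * w) ^ 2 + p * (2 * b * u * v) ^ 2 := by ring
end

section
/- If there are infinitely many natural numbers t such that t⁴ - 3t² + 3 is prime, then there are infinitely many natural numbers x such that x³ + 1 is an SP number. -/
/-- If there are infinitely many naturals `t` with `t ^ 4 - 3 * t ^ 2 + 3` prime, then there
are infinitely many naturals `x` with `x ^ 3 + 1` an SP number. -/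
theorem infinitely_many_sp_cube_add_one_of_bunyakovsky
    (h : {t : ℕ | Prime ((t : ℤ) ^ 4 - 3 * (t : ℤ) ^ 2 + 3)}.Infinite) :
    {x : ℕ | IsSP (x ^ 3 + 1)}.Infinite := by
  set S := {t : ℕ | Prime ((t : ℤ) ^ 4 - 3 * (t : ℤ) ^ 2 + 3)}
  have h2 : (S \ {t | t < 2}).Infinite := h.diff (Set.finite_lt_nat 2)
  have hinj : Set.InjOn (fun t => t ^ 2 - 1) (S \ {t | t < 2}) := by
    intro a ha b hb hab
    have ha2 : 2 ≤ a := not_lt.mp ha.2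
    have hb2 : 2 ≤ b := not_lt.mp hb.2
    simp only at hab
    have h1 : 1 ≤ a ^ 2 := by nlinarith
    have h1' : 1 ≤ b ^ 2 := by nlinarith
    zify [h1, h1'] at hab
    have : (a : ℤ) = b := by nlinarith [sq_nonneg ((a:ℤ) - b), sq_nonneg ((a:ℤ) + b)]
    exact_mod_cast this
  refine ((h2.image hinj).mono ?_)
  rintro x ⟨t, ht, rfl⟩
  have ht2 : 2 ≤ t := not_lt.mp ht.2
  have hp : Prime ((t : ℤ) ^ 4 - 3 * (t : ℤ) ^ 2 + 3) := ht.1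
  have h4 : 2 * 2 ≤ t * t := Nat.mul_le_mul ht2 ht2
  have hge : 3 * t ^ 2 ≤ t ^ 4 := by nlinarith
  have hcast : ((t ^ 4 - 3 * t ^ 2 + 3 : ℕ) : ℤ) = (t : ℤ) ^ 4 - 3 * (t : ℤ) ^ 2 + 3 := by
    push_cast [Nat.sub_add_cancel, hge]
    ring
  refine ⟨t ^ 4 - 3 * t ^ 2 + 3, t, ?_, ht2, ?_⟩
  · rw [Nat.prime_iff_prime_int, hcast]; exact hp
  · have h1 : 1 ≤ t ^ 2 := by nlinarith
    have : ((((t ^ 2 - 1) ^ 3 + 1 : ℕ)) : ℤ) = ((t ^ 4 - 3 * t ^ 2 + 3 : ℕ) : ℤ) * (t : ℤ) ^ 2 := by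
      rw [hcast]
      push_cast [h1]
      ring
    exact_mod_cast this
end
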